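/- Let A and B be loxodromic elements of SU(3,1) with eigen-data such that the pair (A,B) is non-singular. Then there is no complex linear subspace V of ℂ⁴ with 0 < dim V < 4 that is invariant under both A and B; in particular, A and B have no common eigenvector, and the group generated by A and B is irreducible (it preserves no proper complex totally geodesic subspace of complex hyperbolic 3-space). -/

import Mathlib

open Complex ComplexConjugate Matrix Polynomial

noncomputable section

abbrev Vec4 := Fin 4 → ℂ
abbrev Mat4 := Matrix (Fin 4) (Fin 4) ℂ

/-- The Hermitian form of signature (3,1):
`⟨z,w⟩ = z₁·conj(w₄) + z₂·conj(w₂) + z₃·conj(w₃) + z₄·conj(w₁)`. -/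
def hermForm (z w : Vec4) : ℂ :=
  z 0 * conj (w 3) + z 1 * conj (w 1) + z 2 * conj (w 2) + z 3 * conj (w 0)

/-- The matrix of the Hermitian form. -/
def Hmat : Mat4 := !![0,0,0,1; 0,1,0,0; 0,0,1,0; 1,0,0,0]

/-- `A ∈ SU(3,1)`: `(conj A)ᵀ H A = H` and `det A = 1`. -/
def isSU31 (A : Mat4) : Prop := Aᴴ * Hmat * A = Hmat ∧ A.det = 1

/-- Koranyi-Riemann cross-ratio. -/
def crossRatio (z1 z2 z3 z4 : Vec4) : ℂ :=
  (hermForm z3 z1 * hermForm z4 z2) / (hermForm z4 z1 * hermForm z3 z2)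

/-- No two of the four vectors are complex multiples of one another. -/
def PairwiseNotProp4 (z1 z2 z3 z4 : Vec4) : Prop :=
  (∀ c : ℂ, z1 ≠ c • z2) ∧ (∀ c : ℂ, z1 ≠ c • z3) ∧ (∀ c : ℂ, z1 ≠ c • z4) ∧
  (∀ c : ℂ, z2 ≠ c • z3) ∧ (∀ c : ℂ, z2 ≠ c • z4) ∧ (∀ c : ℂ, z3 ≠ c • z4)

/-- `u` is a nonzero complex multiple of `v`. -/
def PropNZ (u v : Vec4) : Prop := ∃ c : ℂ, c ≠ 0 ∧ u = c • v

/-- A loxodromic element of SU(3,1), equipped with its eigen-data. -/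
structure Lox where
  M : Mat4
  hM : isSU31 M
  r : ℝ
  θ : ℝ
  φ : ℝ
  hr : 1 < r
  a : Vec4
  x : Vec4
  y : Vec4
  rp : Vec4
  hbasis : LinearIndependent ℂ ![a, x, y, rp]
  ha : M.mulVec a = ((r : ℂ) * Complex.exp ((θ : ℂ) * Complex.I)) • a
  hx : M.mulVec x = Complex.exp ((φ : ℂ) * Complex.I) • x
  hy : M.mulVec y = Complex.exp (-(2*(θ : ℂ)+(φ : ℂ)) * Complex.I) • y
  hrp : M.mulVec rp = ((r : ℂ)⁻¹ * Complex.exp ((θ : ℂ) * Complex.I)) • rp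
  hnull_a : hermForm a a = 0
  hnull_r : hermForm rp rp = 0
  hx1 : hermForm x x = 1
  hy1 : hermForm y y = 1

/-- Goldman's eta invariant `η(a,r;x)` for null `a`, `r` and positive `x`. -/
def etaV (aA rA xB : Vec4) : ℂ :=
  (hermForm aA xB * hermForm xB rA) / (hermForm aA rA * hermForm xB xB)

def eta1 (A B : Lox) : ℂ := etaV A.a A.rp B.x
def eta2 (A B : Lox) : ℂ := etaV A.a A.rp B.y
def nu1 (A B : Lox) : ℂ := etaV B.a B.rp A.x
def nu2 (A B : Lox) : ℂ := etaV B.a B.rp A.y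

def X1 (A B : Lox) : ℂ := crossRatio B.a A.a A.rp B.rp
def X2 (A B : Lox) : ℂ := crossRatio B.a A.rp A.a B.rp
def X3 (A B : Lox) : ℂ := crossRatio A.a A.rp B.a B.rp

def alpha1 (A B : Lox) : ℂ := crossRatio A.rp A.a B.x B.a
def alpha2 (A B : Lox) : ℂ := crossRatio A.rp A.a B.y B.a
def beta1 (A B : Lox) : ℂ := crossRatio B.rp B.a A.x A.a
def beta2 (A B : Lox) : ℂ := crossRatio B.rp B.a A.y A.a

def etaIdx (i : Fin 2) (A B : Lox) : ℂ := if i = 0 then eta1 A B else eta2 A B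
def nuIdx (j : Fin 2) (A B : Lox) : ℂ := if j = 0 then nu1 A B else nu2 A B
def alphaIdx (i : Fin 2) (A B : Lox) : ℂ := if i = 0 then alpha1 A B else alpha2 A B
def betaIdx (j : Fin 2) (A B : Lox) : ℂ := if j = 0 then beta1 A B else beta2 A B

/-- Non-singularity of the eigen-data of a pair of loxodromic elements. -/
def NonSingularV (aA xA yA rA aB xB yB rB : Vec4) : Prop :=
  PairwiseNotProp4 aA rA aB rB ∧
  LinearIndependent ℂ ![aA, rA, aB, rB] ∧
  (etaV aA rA xB ≠ 0 ∨ etaV aA rA yB ≠ 0) ∧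
  (etaV aB rB xA ≠ 0 ∨ etaV aB rB yA ≠ 0)

/-- The pair `(A,B)` of loxodromic elements is non-singular. -/
def NonSingular (A B : Lox) : Prop :=
  NonSingularV A.a A.x A.y A.rp B.a B.x B.y B.rp

/-- trace. -/
def tau (A : Mat4) : ℂ := A.trace

/-- `σ_A = (tr(A)² − tr(A²))/2`. -/
def sigma (A : Mat4) : ℂ := ((A.trace)^2 - (A^2).trace)/2

/-- Cartan's angular invariant. -/
def cartan (z1 z2 z3 : Vec4) : ℝ :=
  Complex.arg (-(hermForm z1 z2 * hermForm z2 z3 * hermForm z3 z1))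

/-- The diagonal matrix `E(κ,ψ)`. -/
def Emat (κ : ℂ) (ψ : ℝ) : Mat4 :=
  Matrix.diagonal
    ![Complex.exp κ,
      Complex.exp (-((ψ : ℂ) * Complex.I) + (conj κ - κ)/2),
      Complex.exp ((ψ : ℂ) * Complex.I + (conj κ - κ)/2),
      Complex.exp (-(conj κ))]

/-- Anti-holomorphic isometric involution `z ↦ M·conj(z)` of `ℂ^{3,1}`. -/
def AntiHolInv (M : Mat4) : Prop :=
  M * (M.map (starRingEnd ℂ)) = 1 ∧
  ∀ z w : Vec4, hermForm (M.mulVec (star z)) (M.mulVec (star w)) = conj (hermForm z w)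

/-!
For a loxodromic `L` the eigenvalue moduli `r > 1`, `1`, `1`, `r⁻¹` separate the lines `ℂ a`,
`ℂ r` and the plane `W = span {x, y}`, so an `L`-invariant subspace `V` contains the `a`- and
`r`-components of each of its vectors. The plane `W` is orthogonal to `a` and `r` and positive
definite, hence the null vectors of `V` lie on `ℂ a` if `r ∉ V`, and on `ℂ r` if `a ∉ V`.
If `V` is invariant under `A` and `B` and contains one of `a_A, r_A, a_B, r_B`, this null vector
is off the eigenlines of the other element, which puts the other pair into `V`, and then the
first pair as well: `V` contains a basis, so `V = ℂ⁴`. If `V` contains none of them, then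
`V ⊆ W_A ∩ W_B` is orthogonal to a basis, so `V = 0`.
-/

section HermForm

@[simp] lemma hermForm_add_left (z w u : Vec4) :
    hermForm (z + w) u = hermForm z u + hermForm w u := by
  simp only [hermForm, Pi.add_apply]; ring

@[simp] lemma hermForm_add_right (z w u : Vec4) :
    hermForm z (w + u) = hermForm z w + hermForm z u := by
  simp only [hermForm, Pi.add_apply, map_add]; ring

@[simp] lemma hermForm_smul_left (c : ℂ) (z w : Vec4) :
    hermForm (c • z) w = c * hermForm z w := by
  simp only [hermForm, Pi.smul_apply, smul_eq_mul]; ring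

@[simp] lemma hermForm_smul_right (c : ℂ) (z w : Vec4) :
    hermForm z (c • w) = conj c * hermForm z w := by
  simp only [hermForm, Pi.smul_apply, smul_eq_mul, map_mul]; ring

lemma hermForm_conj_symm (z w : Vec4) : conj (hermForm w z) = hermForm z w := by
  simp only [hermForm, map_add, map_mul, conj_conj]; ring

def hermFormₛₗ : Vec4 →ₗ[ℂ] Vec4 →ₗ⋆[ℂ] ℂ :=
  LinearMap.mk₂'ₛₗ (RingHom.id ℂ) (starRingEnd ℂ) hermForm hermForm_add_left
    hermForm_smul_left hermForm_add_right hermForm_smul_right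

lemma hermForm_eq_dotProduct (z w : Vec4) : hermForm z w = star w ⬝ᵥ Hmat *ᵥ z := by
  simp [hermForm, Hmat, dotProduct, mulVec, Fin.sum_univ_four]
  ring

lemma eq_zero_of_forall_hermForm_eq_zero {z : Vec4} (h : ∀ w, hermForm z w = 0) : z = 0 := by
  have h0 := h (Pi.single 0 1)
  have h1 := h (Pi.single 1 1)
  have h2 := h (Pi.single 2 1)
  have h3 := h (Pi.single 3 1)
  simp [hermForm] at h0 h1 h2 h3
  funext i
  fin_cases i <;> assumption

lemma eq_zero_of_hermForm_eq_zero_of_linearIndependent {z : Vec4} {v : Fin 4 → Vec4}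
    (hv : LinearIndependent ℂ v) (h : ∀ i, hermForm z (v i) = 0) : z = 0 := by
  have hspan := hv.span_eq_top_of_card_eq_finrank (by simp)
  have : hermFormₛₗ z = 0 := LinearMap.ext_on_range hspan h
  exact eq_zero_of_forall_hermForm_eq_zero fun w => LinearMap.congr_fun this w

lemma hermForm_smul_add_self {n w : Vec4} (hn : hermForm n n = 0) (hwn : hermForm w n = 0)
    (c : ℂ) : hermForm (c • n + w) (c • n + w) = hermForm w w := by
  have hnw : hermForm n w = 0 := by rw [← hermForm_conj_symm, hwn, map_zero]
  simp [hn, hnw, hwn]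

lemma hermForm_mulVec_mulVec {M : Mat4} (hM : isSU31 M) (z w : Vec4) :
    hermForm (M *ᵥ z) (M *ᵥ w) = hermForm z w := by
  rw [hermForm_eq_dotProduct, hermForm_eq_dotProduct, star_mulVec, ← dotProduct_mulVec,
    mulVec_mulVec, mulVec_mulVec, hM.1]

lemma hermForm_eq_zero_of_mulVec_eq_smul {M : Mat4} (hM : isSU31 M) {v w : Vec4} {μ ν : ℂ}
    (hv : M *ᵥ v = μ • v) (hw : M *ᵥ w = ν • w) (hμν : ‖μ‖ * ‖ν‖ ≠ 1) :
    hermForm v w = 0 := by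
  by_contra hvw
  have h := hermForm_mulVec_mulVec hM v w
  rw [hv, hw, hermForm_smul_left, hermForm_smul_right, ← mul_assoc,
    mul_eq_right₀ hvw] at h
  apply hμν
  simpa using congrArg norm h

lemma gram_eq (v : Fin 4 → Vec4) :
    (of v)ᵀᴴ * Hmat * (of v)ᵀ = of fun i j => hermForm (v j) (v i) := by
  ext i j
  simp [hermForm, Hmat, mul_apply, Fin.sum_univ_four]
  ring

lemma det_Hmat : Hmat.det = -1 := by
  simp [Hmat, det_succ_row_zero, Fin.sum_univ_succ, Fin.succAbove]
  norm_num

end HermForm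

section InvariantSubmodule

lemma aeval_apply_mem {R E : Type*} [CommRing R] [AddCommGroup E] [Module R E]
    {f : Module.End R E} {V : Submodule R E} (hV : ∀ v ∈ V, f v ∈ V) (p : R[X]) {v : E}
    (hv : v ∈ V) : aeval f p v ∈ V := by
  induction p using Polynomial.induction_on generalizing v with
  | C a => simpa [Module.algebraMap_end_apply] using V.smul_mem a hv
  | add p q hp hq => simpa using V.add_mem (hp hv) (hq hv)
  | monomial n a h =>
    rw [pow_succ, ← mul_assoc, map_mul, Module.End.mul_apply, aeval_X]
    exact h (hV v hv)

lemma mem_of_add_mem_of_aeval_eq_zero {K E : Type*} [Field K] [AddCommGroup E] [Module K E]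
    {f : Module.End K E} {V : Submodule K E} (hV : ∀ v ∈ V, f v ∈ V) {p : K[X]} {μ : K}
    {u w : E} (hu : f u = μ • u) (hw : aeval f p w = 0) (hp : p.eval μ ≠ 0) (h : u + w ∈ V) :
    u ∈ V := by
  have := aeval_apply_mem hV p h
  rw [map_add, hw, add_zero, Module.End.aeval_apply_of_mem_apply_eq_smul hu] at this
  exact (V.smul_mem_iff hp).mp this

end InvariantSubmodule

lemma LinearIndependent.notMem_span_singleton {ι R M : Type*} [Ring R] [Nontrivial R]
    [AddCommGroup M] [Module R M] {v : ι → M} (hv : LinearIndependent R v) {i j : ι}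
    (hij : i ≠ j) : v i ∉ R ∙ v j := by
  simpa using hv.notMem_span_image (s := {j}) (x := i) hij

namespace Lox

section Eigenvalues

variable (L : Lox)

def μa : ℂ := (L.r : ℂ) * Complex.exp ((L.θ : ℂ) * Complex.I)
def μx : ℂ := Complex.exp ((L.φ : ℂ) * Complex.I)
def μy : ℂ := Complex.exp (-(2 * (L.θ : ℂ) + (L.φ : ℂ)) * Complex.I)
def μr : ℂ := (L.r : ℂ)⁻¹ * Complex.exp ((L.θ : ℂ) * Complex.I)

lemma mulVec_a : L.M *ᵥ L.a = L.μa • L.a := L.ha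
lemma mulVec_x : L.M *ᵥ L.x = L.μx • L.x := L.hx
lemma mulVec_y : L.M *ᵥ L.y = L.μy • L.y := L.hy
lemma mulVec_rp : L.M *ᵥ L.rp = L.μr • L.rp := L.hrp

lemma norm_μa : ‖L.μa‖ = L.r := by
  simp [μa, Complex.norm_exp_ofReal_mul_I, abs_of_pos (zero_lt_one.trans L.hr)]

lemma norm_μx : ‖L.μx‖ = 1 := Complex.norm_exp_ofReal_mul_I _

lemma norm_μy : ‖L.μy‖ = 1 := by
  simp [μy, Complex.norm_exp]

lemma norm_μr : ‖L.μr‖ = L.r⁻¹ := by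
  simp [μr, Complex.norm_exp_ofReal_mul_I, abs_of_pos (zero_lt_one.trans L.hr)]

lemma r_ne_one : L.r ≠ 1 := L.hr.ne'

lemma r_inv_ne_one : L.r⁻¹ ≠ 1 := inv_ne_one.mpr L.r_ne_one

lemma r_ne_r_inv : L.r ≠ L.r⁻¹ := by
  have := inv_lt_one_of_one_lt₀ L.hr
  linarith [L.hr]

lemma hermForm_x_a : hermForm L.x L.a = 0 :=
  hermForm_eq_zero_of_mulVec_eq_smul L.hM L.mulVec_x L.mulVec_a
    (by simpa [norm_μx, norm_μa] using L.r_ne_one)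

lemma hermForm_y_a : hermForm L.y L.a = 0 :=
  hermForm_eq_zero_of_mulVec_eq_smul L.hM L.mulVec_y L.mulVec_a
    (by simpa [norm_μy, norm_μa] using L.r_ne_one)

lemma hermForm_x_rp : hermForm L.x L.rp = 0 :=
  hermForm_eq_zero_of_mulVec_eq_smul L.hM L.mulVec_x L.mulVec_rp
    (by simpa [norm_μx, norm_μr] using L.r_inv_ne_one)

lemma hermForm_y_rp : hermForm L.y L.rp = 0 :=
  hermForm_eq_zero_of_mulVec_eq_smul L.hM L.mulVec_y L.mulVec_rp
    (by simpa [norm_μy, norm_μr] using L.r_inv_ne_one)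

/-- The Gram determinant of the eigenbasis is `-|⟨a,r⟩|² (1 - |⟨x,y⟩|²)`; since `det H = -1`
it is also `-|det (a,x,y,r)|² < 0`. -/
lemma norm_hermForm_x_y_lt_one : ‖hermForm L.x L.y‖ < 1 := by
  have hax : hermForm L.a L.x = 0 := by rw [← hermForm_conj_symm, L.hermForm_x_a, map_zero]
  have hay : hermForm L.a L.y = 0 := by rw [← hermForm_conj_symm, L.hermForm_y_a, map_zero]
  have hrx : hermForm L.rp L.x = 0 := by rw [← hermForm_conj_symm, L.hermForm_x_rp, map_zero]
  have hry : hermForm L.rp L.y = 0 := by rw [← hermForm_conj_symm, L.hermForm_y_rp, map_zero]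
  have hG : (of fun i j => hermForm (![L.a, L.x, L.y, L.rp] j) (![L.a, L.x, L.y, L.rp] i)).det
      = -(hermForm L.a L.rp * conj (hermForm L.a L.rp)
        * (1 - hermForm L.x L.y * conj (hermForm L.x L.y))) := by
    simp [det_succ_row_zero, Fin.sum_univ_succ, Fin.succAbove, L.hnull_a, L.hnull_r, L.hx1,
      L.hy1, L.hermForm_x_a, L.hermForm_y_a, L.hermForm_x_rp, L.hermForm_y_rp, hax, hay, hrx, hry,
      hermForm_conj_symm]
    ring
  have hgram := congrArg det (gram_eq ![L.a, L.x, L.y, L.rp])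
  rw [det_mul, det_mul, det_conjTranspose, det_transpose, det_Hmat, hG, star_def] at hgram
  set Q : Mat4 := of ![L.a, L.x, L.y, L.rp]
  have hQ : Q.det ≠ 0 :=
    (isUnit_iff_isUnit_det Q).mp (linearIndependent_rows_iff_isUnit.mp L.hbasis) |>.ne_zero
  have hnorm : ‖Q.det‖ ^ 2 = ‖hermForm L.a L.rp‖ ^ 2 * (1 - ‖hermForm L.x L.y‖ ^ 2) := by
    have : ((‖Q.det‖ ^ 2 : ℝ) : ℂ) = ‖hermForm L.a L.rp‖ ^ 2 * (1 - ‖hermForm L.x L.y‖ ^ 2) := by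
      rw [ofReal_pow, ← mul_conj', ← mul_conj', ← mul_conj']
      linear_combination -hgram
    exact_mod_cast this
  have hpos : 0 < ‖hermForm L.a L.rp‖ ^ 2 * (1 - ‖hermForm L.x L.y‖ ^ 2) := by
    rw [← hnorm]; positivity
  nlinarith [pos_of_mul_pos_right hpos (by positivity), norm_nonneg (hermForm L.x L.y)]

end Eigenvalues

section SpanXY

variable (L : Lox)

def W : Submodule ℂ Vec4 := Submodule.span ℂ {L.x, L.y}

lemma exists_eq_smul_a_add_smul_rp_add (v : Vec4) :
    ∃ α δ : ℂ, ∃ w ∈ L.W, v = α • L.a + δ • L.rp + w := by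
  have hv : v ∈ Submodule.span ℂ (Set.range ![L.a, L.x, L.y, L.rp]) := by
    rw [L.hbasis.span_eq_top_of_card_eq_finrank (by simp)]; trivial
  obtain ⟨c, rfl⟩ := (Submodule.mem_span_range_iff_exists_fun ℂ).mp hv
  refine ⟨c 0, c 3, c 1 • L.x + c 2 • L.y, Submodule.mem_span_pair.mpr ⟨_, _, rfl⟩, ?_⟩
  simp only [Fin.sum_univ_four, Matrix.cons_val]
  abel

variable {L} {w : Vec4}

lemma hermForm_a_of_mem_W (hw : w ∈ L.W) : hermForm w L.a = 0 := by
  obtain ⟨β, γ, rfl⟩ := Submodule.mem_span_pair.mp hw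
  simp [L.hermForm_x_a, L.hermForm_y_a]

lemma hermForm_rp_of_mem_W (hw : w ∈ L.W) : hermForm w L.rp = 0 := by
  obtain ⟨β, γ, rfl⟩ := Submodule.mem_span_pair.mp hw
  simp [L.hermForm_x_rp, L.hermForm_y_rp]

lemma eq_zero_of_mem_W_of_hermForm_self (hw : w ∈ L.W) (hnull : hermForm w w = 0) : w = 0 := by
  obtain ⟨β, γ, rfl⟩ := Submodule.mem_span_pair.mp hw
  set g := hermForm L.x L.y
  set z := β * conj γ * g
  have hexp : hermForm (β • L.x + γ • L.y) (β • L.x + γ • L.y)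
      = ((‖β‖ ^ 2 + ‖γ‖ ^ 2 + 2 * z.re : ℝ) : ℂ) := by
    simp only [hermForm_add_left, hermForm_add_right, hermForm_smul_left, hermForm_smul_right,
      L.hx1, L.hy1, ← hermForm_conj_symm L.y L.x]
    push_cast
    rw [re_eq_add_conj, ← mul_conj', ← mul_conj']
    simp only [z, g, map_mul, conj_conj]
    ring
  have hre : ‖β‖ ^ 2 + ‖γ‖ ^ 2 + 2 * z.re = 0 := by exact_mod_cast hexp ▸ hnull
  have hz : -(‖β‖ * ‖γ‖ * ‖g‖) ≤ z.re := by
    have := neg_abs_le z.re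
    have := abs_re_le_norm z
    simp only [z, norm_mul, norm_conj] at *
    linarith
  have hg := L.norm_hermForm_x_y_lt_one
  -- `‖β‖² + ‖γ‖² ≤ 2 ‖β‖ ‖γ‖ ‖g‖ ≤ ‖g‖ (‖β‖² + ‖γ‖²)` with `‖g‖ < 1`
  have hsum : ‖β‖ ^ 2 + ‖γ‖ ^ 2 ≤ 0 := by
    nlinarith [norm_nonneg β, norm_nonneg γ, norm_nonneg g, sq_nonneg (‖β‖ - ‖γ‖),
      mul_nonneg (norm_nonneg g) (sq_nonneg (‖β‖ - ‖γ‖))]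
  have hβ : β = 0 := by
    rw [← norm_eq_zero]; nlinarith [sq_nonneg ‖β‖, sq_nonneg ‖γ‖, norm_nonneg β]
  have hγ : γ = 0 := by
    rw [← norm_eq_zero]; nlinarith [sq_nonneg ‖β‖, sq_nonneg ‖γ‖, norm_nonneg γ]
  simp [hβ, hγ]

lemma aeval_apply_eq_zero_of_mem_W {p : ℂ[X]} (hx : p.eval L.μx = 0) (hy : p.eval L.μy = 0)
    (hw : w ∈ L.W) : aeval (toLin' L.M) p w = 0 := by
  suffices L.W ≤ LinearMap.ker (aeval (toLin' L.M) p) from this hw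
  rw [W, Submodule.span_le, Set.insert_subset_iff, Set.singleton_subset_iff]
  constructor
  · rw [SetLike.mem_coe, LinearMap.mem_ker,
      Module.End.aeval_apply_of_mem_apply_eq_smul (by simpa using L.mulVec_x), hx, zero_smul]
  · rw [SetLike.mem_coe, LinearMap.mem_ker,
      Module.End.aeval_apply_of_mem_apply_eq_smul (by simpa using L.mulVec_y), hy, zero_smul]

end SpanXY

section InvariantSubspace

variable {L : Lox} {V : Submodule ℂ Vec4}

lemma smul_a_mem (hV : ∀ v ∈ V, L.M *ᵥ v ∈ V) {α δ : ℂ} {w : Vec4} (hw : w ∈ L.W)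
    (h : α • L.a + δ • L.rp + w ∈ V) : α • L.a ∈ V := by
  refine mem_of_add_mem_of_aeval_eq_zero (f := toLin' L.M) (by simpa using hV)
    (p := (X - C L.μx) * (X - C L.μy) * (X - C L.μr)) (μ := L.μa) (w := δ • L.rp + w) ?_ ?_ ?_
    (by rwa [← add_assoc])
  · simp [L.mulVec_a, smul_comm α]
  · rw [map_add, map_smul, Module.End.aeval_apply_of_mem_apply_eq_smul (by simpa using L.mulVec_rp),
      aeval_apply_eq_zero_of_mem_W (by simp) (by simp) hw]
    simp
  · have hx : L.μa ≠ L.μx := ne_of_apply_ne norm (by simpa [norm_μa, norm_μx] using L.r_ne_one)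
    have hy : L.μa ≠ L.μy := ne_of_apply_ne norm (by simpa [norm_μa, norm_μy] using L.r_ne_one)
    have hr : L.μa ≠ L.μr := ne_of_apply_ne norm (by simpa [norm_μa, norm_μr] using L.r_ne_r_inv)
    simp [sub_eq_zero, hx, hy, hr]

lemma smul_rp_mem (hV : ∀ v ∈ V, L.M *ᵥ v ∈ V) {α δ : ℂ} {w : Vec4} (hw : w ∈ L.W)
    (h : α • L.a + δ • L.rp + w ∈ V) : δ • L.rp ∈ V := by
  refine mem_of_add_mem_of_aeval_eq_zero (f := toLin' L.M) (by simpa using hV)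
    (p := (X - C L.μx) * (X - C L.μy) * (X - C L.μa)) (μ := L.μr) (w := α • L.a + w) ?_ ?_ ?_
    (by rwa [add_comm (α • L.a), add_assoc] at h)
  · simp [L.mulVec_rp, smul_comm δ]
  · rw [map_add, map_smul, Module.End.aeval_apply_of_mem_apply_eq_smul (by simpa using L.mulVec_a),
      aeval_apply_eq_zero_of_mem_W (by simp) (by simp) hw]
    simp
  · have hx : L.μr ≠ L.μx := ne_of_apply_ne norm (by simpa [norm_μr, norm_μx] using L.r_inv_ne_one)
    have hy : L.μr ≠ L.μy := ne_of_apply_ne norm (by simpa [norm_μr, norm_μy] using L.r_inv_ne_one)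
    have ha : L.μr ≠ L.μa :=
      ne_of_apply_ne norm (by simpa [norm_μa, norm_μr] using L.r_ne_r_inv.symm)
    simp [sub_eq_zero, hx, hy, ha]

lemma mem_span_a_of_hermForm_self (hV : ∀ v ∈ V, L.M *ᵥ v ∈ V) (hr : L.rp ∉ V) {v : Vec4}
    (hv : v ∈ V) (hnull : hermForm v v = 0) : v ∈ ℂ ∙ L.a := by
  obtain ⟨α, δ, w, hw, rfl⟩ := L.exists_eq_smul_a_add_smul_rp_add v
  obtain rfl : δ = 0 := by
    by_contra hδ
    exact hr ((V.smul_mem_iff hδ).mp (smul_rp_mem hV hw hv))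
  rw [zero_smul, add_zero, hermForm_smul_add_self L.hnull_a (hermForm_a_of_mem_W hw)] at hnull
  rw [zero_smul, add_zero, eq_zero_of_mem_W_of_hermForm_self hw hnull, add_zero]
  exact Submodule.smul_mem _ _ (Submodule.mem_span_singleton_self _)

lemma mem_span_rp_of_hermForm_self (hV : ∀ v ∈ V, L.M *ᵥ v ∈ V) (ha : L.a ∉ V) {v : Vec4}
    (hv : v ∈ V) (hnull : hermForm v v = 0) : v ∈ ℂ ∙ L.rp := by
  obtain ⟨α, δ, w, hw, rfl⟩ := L.exists_eq_smul_a_add_smul_rp_add v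
  obtain rfl : α = 0 := by
    by_contra hα
    exact ha ((V.smul_mem_iff hα).mp (smul_a_mem hV hw hv))
  rw [zero_smul, zero_add, hermForm_smul_add_self L.hnull_r (hermForm_rp_of_mem_W hw)] at hnull
  rw [zero_smul, zero_add, eq_zero_of_mem_W_of_hermForm_self hw hnull, add_zero]
  exact Submodule.smul_mem _ _ (Submodule.mem_span_singleton_self _)

lemma mem_W_of_mem (hV : ∀ v ∈ V, L.M *ᵥ v ∈ V) (ha : L.a ∉ V) (hr : L.rp ∉ V) {v : Vec4}
    (hv : v ∈ V) : v ∈ L.W := by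
  obtain ⟨α, δ, w, hw, rfl⟩ := L.exists_eq_smul_a_add_smul_rp_add v
  obtain rfl : α = 0 := by
    by_contra hα
    exact ha ((V.smul_mem_iff hα).mp (smul_a_mem hV hw hv))
  obtain rfl : δ = 0 := by
    by_contra hδ
    exact hr ((V.smul_mem_iff hδ).mp (smul_rp_mem hV hw hv))
  simpa using hw

lemma a_mem_and_rp_mem (hV : ∀ v ∈ V, L.M *ᵥ v ∈ V) {n : Vec4} (hn : n ∈ V)
    (hnull : hermForm n n = 0) (ha : n ∉ ℂ ∙ L.a) (hr : n ∉ ℂ ∙ L.rp) : L.a ∈ V ∧ L.rp ∈ V :=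
  ⟨by_contra fun h => hr (mem_span_rp_of_hermForm_self hV h hn hnull),
    by_contra fun h => ha (mem_span_a_of_hermForm_self hV h hn hnull)⟩

end InvariantSubspace

end Lox

section Pair

variable {V : Submodule ℂ Vec4}

lemma a_mem_and_rp_mem_of_mem (S T : Lox) (hind : LinearIndependent ℂ ![S.a, S.rp, T.a, T.rp])
    (hT : ∀ v ∈ V, T.M *ᵥ v ∈ V) (hS : S.a ∈ V ∨ S.rp ∈ V) : T.a ∈ V ∧ T.rp ∈ V := by
  rcases hS with hSa | hSr
  · exact Lox.a_mem_and_rp_mem hT hSa S.hnull_a (hind.notMem_span_singleton (i := 0) (j := 2)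
      (by decide)) (hind.notMem_span_singleton (i := 0) (j := 3) (by decide))
  · exact Lox.a_mem_and_rp_mem hT hSr S.hnull_r (hind.notMem_span_singleton (i := 1) (j := 2)
      (by decide)) (hind.notMem_span_singleton (i := 1) (j := 3) (by decide))

lemma eq_bot_or_eq_top_of_invariant (A B : Lox)
    (hind : LinearIndependent ℂ ![A.a, A.rp, B.a, B.rp])
    (hA : ∀ v ∈ V, A.M *ᵥ v ∈ V) (hB : ∀ v ∈ V, B.M *ᵥ v ∈ V) : V = ⊥ ∨ V = ⊤ := by
  have hind' : LinearIndependent ℂ ![B.a, B.rp, A.a, A.rp] := by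
    convert hind.comp ![2, 3, 0, 1] (by decide) using 1
    ext i : 1; fin_cases i <;> rfl
  by_cases hAV : A.a ∈ V ∨ A.rp ∈ V
  · right
    obtain ⟨hBa, hBr⟩ := a_mem_and_rp_mem_of_mem A B hind hB hAV
    obtain ⟨hAa, hAr⟩ := a_mem_and_rp_mem_of_mem B A hind' hA (Or.inl hBa)
    rw [eq_top_iff, ← hind.span_eq_top_of_card_eq_finrank (by simp), Submodule.span_le,
      Set.range_subset_iff]
    intro i; fin_cases i <;> assumption
  · left
    obtain ⟨hBa, hBr⟩ : B.a ∉ V ∧ B.rp ∉ V := not_or.mp fun h =>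
      hAV (.inl (a_mem_and_rp_mem_of_mem B A hind' hA h).1)
    obtain ⟨hAa, hAr⟩ := not_or.mp hAV
    refine (Submodule.eq_bot_iff V).mpr fun v hv => ?_
    have hvA := Lox.mem_W_of_mem hA hAa hAr hv
    have hvB := Lox.mem_W_of_mem hB hBa hBr hv
    refine eq_zero_of_hermForm_eq_zero_of_linearIndependent hind fun i => ?_
    fin_cases i
    exacts [Lox.hermForm_a_of_mem_W hvA, Lox.hermForm_rp_of_mem_W hvA,
      Lox.hermForm_a_of_mem_W hvB, Lox.hermForm_rp_of_mem_W hvB]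

end Pair

/-- a non-singular pair of loxodromic elements admits no common
invariant proper nonzero complex subspace of ℂ⁴; in particular the group
generated by `A` and `B` is irreducible. -/
theorem nonSingular_irreducible (A B : Lox) (h : NonSingular A B) :
    ¬ ∃ V : Submodule ℂ Vec4,
        0 < Module.finrank ℂ ↥V ∧ Module.finrank ℂ ↥V < 4 ∧
        (∀ v ∈ V, A.M.mulVec v ∈ V) ∧ (∀ v ∈ V, B.M.mulVec v ∈ V) := by
  rintro ⟨V, hpos, hlt, hA, hB⟩
  rcases eq_bot_or_eq_top_of_invariant A B h.2.1 hA hB with rfl | rfl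
  · simp at hpos
  · simp at hlt
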